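/- Let k ≥ 1, let S be a simplicial k-complex, and let u, v be distinct vertices of S. Let S† be the set of all (k+1)-element sets K ⊆ V(S) with {u,v} ⊆ K such that both K∖{u} and K∖{v} are contained in some simplex of S, and let S* = {K ∈ S† : K∖{u} ∈ ∂S and K∖{v} ∈ ∂S}. Then: (a) if S △ S′ is a simplicial k-cycle for some S′ ⊆ S†, then S′ = S*; (b) S/uv is a simplicial k-cycle if and only if S △ S* is a simplicial k-cycle; and (c) if S/uv is a simplicial k-circuit, then S △ S* is a simplicial k-circuit. Here △ denotes symmetric difference. -/

import Mathlib

/-! ### Simplicial multicomplexes over the vertex type ℕ -/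

/-- The vertex set of a simplicial multicomplex: the union of its simplices. -/
def vertexSet (S : Multiset (Finset ℕ)) : Finset ℕ := S.toFinset.sup id

lemma mem_vertexSet_of_mem {S : Multiset (Finset ℕ)} {U : Finset ℕ} {x : ℕ}
    (hU : U ∈ S) (hx : x ∈ U) : x ∈ vertexSet S :=
  Finset.mem_of_subset (Finset.le_sup (f := id) (Multiset.mem_toFinset.2 hU)) hx

/-- The number of simplices of `S` containing `F`, counted with multiplicity. -/
def simplexCount (S : Multiset (Finset ℕ)) (F : Finset ℕ) : ℕ :=
  Multiset.countP (fun U => F ⊆ U) S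

/-- `S` is a simplicial `k`-multicomplex: all its members are `(k+1)`-element sets. -/
def IsMultiComplex (k : ℕ) (S : Multiset (Finset ℕ)) : Prop :=
  ∀ U ∈ S, U.card = k + 1

/-- The boundary of `S`: all `k`-element sets lying in an odd number of simplices of `S`,
counted with multiplicity. -/
def boundarySet (k : ℕ) (S : Multiset (Finset ℕ)) : Set (Finset ℕ) :=
  {F | F.card = k ∧ Odd (simplexCount S F)}

/-- A simplicial `k`-cycle: a simplicial `k`-multicomplex with empty boundary. -/
def IsSimpCycle (k : ℕ) (S : Multiset (Finset ℕ)) : Prop :=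
  IsMultiComplex k S ∧ ∀ F : Finset ℕ, F.card = k → Even (simplexCount S F)

/-- A simplicial `k`-circuit: a nonempty simplicial `k`-cycle, no proper nonempty
sub-multiset of which is a simplicial `k`-cycle. -/
def IsSimpCircuit (k : ℕ) (S : Multiset (Finset ℕ)) : Prop :=
  IsSimpCycle k S ∧ S ≠ 0 ∧
    ∀ T : Multiset (Finset ℕ), T ≤ S → T ≠ 0 → T ≠ S → ¬ IsSimpCycle k T

/-- A trivial simplicial circuit consists of two copies of a single simplex. -/
def IsTrivialSimpCircuit (S : Multiset (Finset ℕ)) : Prop :=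
  ∃ U : Finset ℕ, S = {U, U}

/-- Symmetric difference of multisets (for multisets with no repeated members this is the
usual symmetric difference of sets). -/
def symmDiffM (S T : Multiset (Finset ℕ)) : Multiset (Finset ℕ) := (S - T) + (T - S)

/-- Contraction of the vertex `v` onto the vertex `u`: delete every simplex containing both
`u` and `v`, and replace every simplex `U` containing `v` but not `u` by `(U∖{v})∪{u}`. -/
def contractS (S : Multiset (Finset ℕ)) (u v : ℕ) : Multiset (Finset ℕ) :=
  (S.filter fun U => ¬ (u ∈ U ∧ v ∈ U)).map fun U =>
    if v ∈ U then insert u (U.erase v) else U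

/-- The link of an edge `uv` of `S`. -/
def linkS (S : Multiset (Finset ℕ)) (u v : ℕ) : Multiset (Finset ℕ) :=
  (S.filter fun U => u ∈ U ∧ v ∈ U).map fun U => U \ {u, v}

/-- `S` is strongly connected: any two simplices are joined by a sequence of simplices of `S`
in which consecutive simplices share at least `k` vertices. -/
def StronglyConnectedS (k : ℕ) (S : Multiset (Finset ℕ)) : Prop :=
  ∀ U ∈ S, ∀ W ∈ S,
    Relation.ReflTransGen (fun A B => A ∈ S ∧ B ∈ S ∧ k ≤ (A ∩ B).card) U W

/-- A `k`-pseudomanifold: a nonempty strongly connected simplicial `k`-complex in which every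
`k`-element subset of a simplex is contained in exactly two simplices. -/
def IsPseudomanifold (k : ℕ) (S : Multiset (Finset ℕ)) : Prop :=
  S.Nodup ∧ IsMultiComplex k S ∧ S ≠ 0 ∧ StronglyConnectedS k S ∧
    ∀ F : Finset ℕ, F.card = k → (∃ U ∈ S, F ⊆ U) → simplexCount S F = 2

/-- Stacked `k`-spheres: obtained from the boundary of a `(k+1)`-simplex by repeated
barycentric subdivisions of facets. -/
inductive IsStackedSphere : ℕ → Multiset (Finset ℕ) → Prop
  | base (k : ℕ) (W : Finset ℕ) (hW : W.card = k + 2) :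
      IsStackedSphere k (W.powersetCard (k + 1)).val
  | subdiv (k : ℕ) (S : Multiset (Finset ℕ)) (U : Finset ℕ) (w : ℕ)
      (hS : IsStackedSphere k S) (hU : U ∈ S) (hw : w ∉ vertexSet S) :
      IsStackedSphere k (symmDiffM S ((insert w U).powersetCard (k + 1)).val)

/-- `S` is a copy of the simplicial `k`-circuit `ℒ_k`. -/
def IsCopyOfL (k : ℕ) (S : Multiset (Finset ℕ)) : Prop :=
  ∃ (U : Finset ℕ) (x y : ℕ), U.card = k + 1 ∧ x ∉ U ∧ y ∉ U ∧ x ≠ y ∧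
    vertexSet S = U ∪ {x, y} ∧
    S = ((U.image fun w => insert x (U.erase w)) ∪ (U.image fun w => insert y (U.erase w))).val

open scoped Classical in
/-- The family `S†`: all `(k+1)`-element subsets `K` of `V(S)` containing `u` and `v` such
that both `K∖{u}` and `K∖{v}` are contained in some simplex of `S`. -/
noncomputable def faceDag (k : ℕ) (S : Multiset (Finset ℕ)) (u v : ℕ) : Multiset (Finset ℕ) :=
  ((vertexSet S).powersetCard (k + 1)).val.filter fun K =>
    u ∈ K ∧ v ∈ K ∧ (∃ U ∈ S, K.erase u ⊆ U) ∧ (∃ U ∈ S, K.erase v ⊆ U)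

open scoped Classical in
/-- The family `S*`: the members `K` of `S†` with `K∖{u}` and `K∖{v}` in the boundary of `S`. -/
noncomputable def faceStar (k : ℕ) (S : Multiset (Finset ℕ)) (u v : ℕ) : Multiset (Finset ℕ) :=
  (faceDag k S u v).filter fun K =>
    K.erase u ∈ boundarySet k S ∧ K.erase v ∈ boundarySet k S

/-! ### Finite graphs with vertices in ℕ -/

/-- A finite simple graph with vertex set a finite subset of `ℕ`. -/
structure FinGraph : Type where
  verts : Finset ℕ
  Adj : ℕ → ℕ → Prop
  symm : ∀ ⦃x y⦄, Adj x y → Adj y x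
  loopless : ∀ x, ¬ Adj x x
  adj_mem : ∀ ⦃x y⦄, Adj x y → x ∈ verts ∧ y ∈ verts

namespace FinGraph

/-- The number of edges of `G`. -/
noncomputable def edgeCount (G : FinGraph) : ℕ := (Sym2.fromRel (r := G.Adj) ⟨fun _ _ h => G.symm h⟩).ncard

/-- `G` is connected. -/
def Connected (G : FinGraph) : Prop :=
  G.verts.Nonempty ∧ ∀ x ∈ G.verts, ∀ y ∈ G.verts, Relation.ReflTransGen G.Adj x y

/-- Deletion of a set of vertices. -/
def deleteVerts (G : FinGraph) (K : Finset ℕ) : FinGraph where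
  verts := G.verts \ K
  Adj x y := G.Adj x y ∧ x ∉ K ∧ y ∉ K
  symm := by
    rintro x y ⟨h, hx, hy⟩
    exact ⟨G.symm h, hy, hx⟩
  loopless := by
    rintro x ⟨h, -, -⟩
    exact G.loopless x h
  adj_mem := by
    rintro x y ⟨h, hx, hy⟩
    exact ⟨Finset.mem_sdiff.2 ⟨(G.adj_mem h).1, hx⟩, Finset.mem_sdiff.2 ⟨(G.adj_mem h).2, hy⟩⟩

/-- `G` is `m`-connected: it has at least `m+1` vertices and deleting any set of fewer than
`m` vertices leaves a connected graph. -/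
def ConnectedGE (m : ℕ) (G : FinGraph) : Prop :=
  m + 1 ≤ G.verts.card ∧ ∀ K : Finset ℕ, K.card < m → (G.deleteVerts K).Connected

/-- `G` is a complete graph on `n` vertices. -/
def IsCompleteOn (G : FinGraph) (n : ℕ) : Prop :=
  G.verts.card = n ∧ ∀ x ∈ G.verts, ∀ y ∈ G.verts, x ≠ y → G.Adj x y

/-- `H` is a subgraph of `G`. -/
def IsSubgraph (H G : FinGraph) : Prop :=
  H.verts ⊆ G.verts ∧ ∀ ⦃x y⦄, H.Adj x y → G.Adj x y

/-- `X` is a clique of `G`. -/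
def IsClique (G : FinGraph) (X : Finset ℕ) : Prop :=
  X ⊆ G.verts ∧ ∀ x ∈ X, ∀ y ∈ X, x ≠ y → G.Adj x y

/-- The union of two graphs. -/
def union (G H : FinGraph) : FinGraph where
  verts := G.verts ∪ H.verts
  Adj x y := G.Adj x y ∨ H.Adj x y
  symm := by
    rintro x y (h | h)
    exacts [Or.inl (G.symm h), Or.inr (H.symm h)]
  loopless := by
    rintro x (h | h)
    exacts [G.loopless x h, H.loopless x h]
  adj_mem := by
    rintro x y (h | h)
    · exact ⟨Finset.mem_union_left _ (G.adj_mem h).1, Finset.mem_union_left _ (G.adj_mem h).2⟩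
    · exact ⟨Finset.mem_union_right _ (H.adj_mem h).1, Finset.mem_union_right _ (H.adj_mem h).2⟩

/-- Adding the edge `uv` to `G` (for vertices `u ≠ v` of `G`). -/
def addEdge (G : FinGraph) (u v : ℕ) : FinGraph where
  verts := G.verts
  Adj x y := G.Adj x y ∨
    (x ≠ y ∧ x ∈ G.verts ∧ y ∈ G.verts ∧ ((x = u ∧ y = v) ∨ (x = v ∧ y = u)))
  symm := by
    rintro x y (h | ⟨hxy, hx, hy, h | h⟩)
    · exact Or.inl (G.symm h)
    · exact Or.inr ⟨hxy.symm, hy, hx, Or.inr ⟨h.2, h.1⟩⟩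
    · exact Or.inr ⟨hxy.symm, hy, hx, Or.inl ⟨h.2, h.1⟩⟩
  loopless := by
    rintro x (h | ⟨hxx, -⟩)
    · exact G.loopless x h
    · exact hxx rfl
  adj_mem := by
    rintro x y (h | ⟨-, hx, hy, -⟩)
    · exact G.adj_mem h
    · exact ⟨hx, hy⟩

/-- Adding a set `B` of unordered pairs of vertices to `G` as edges. -/
def addEdges (G : FinGraph) (B : Finset (Sym2 ℕ)) : FinGraph where
  verts := G.verts
  Adj x y := G.Adj x y ∨ (x ≠ y ∧ x ∈ G.verts ∧ y ∈ G.verts ∧ s(x, y) ∈ B)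
  symm := by
    rintro x y (h | ⟨hxy, hx, hy, hB⟩)
    · exact Or.inl (G.symm h)
    · exact Or.inr ⟨hxy.symm, hy, hx, by rwa [Sym2.eq_swap]⟩
  loopless := by
    rintro x (h | ⟨hxx, -⟩)
    · exact G.loopless x h
    · exact hxx rfl
  adj_mem := by
    rintro x y (h | ⟨-, hx, hy, -⟩)
    · exact G.adj_mem h
    · exact ⟨hx, hy⟩

/-- Deleting the edge `uv` from `G`. -/
def deleteEdge (G : FinGraph) (u v : ℕ) : FinGraph where
  verts := G.verts
  Adj x y := G.Adj x y ∧ ¬ ((x = u ∧ y = v) ∨ (x = v ∧ y = u))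
  symm := by
    rintro x y ⟨h, hne⟩
    refine ⟨G.symm h, fun hc => hne ?_⟩
    rcases hc with ⟨h1, h2⟩ | ⟨h1, h2⟩
    · exact Or.inr ⟨h2, h1⟩
    · exact Or.inl ⟨h2, h1⟩
  loopless := by
    rintro x ⟨h, -⟩
    exact G.loopless x h
  adj_mem := by
    rintro x y ⟨h, -⟩
    exact G.adj_mem h

/-- The contraction `G/uv`: delete `v` and join `u` to every former neighbour of `v`
other than `u`. -/
def contract (G : FinGraph) (u v : ℕ) : FinGraph where
  verts := G.verts.erase v
  Adj x y := x ≠ y ∧ x ∈ G.verts ∧ y ∈ G.verts ∧ x ≠ v ∧ y ≠ v ∧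
    (G.Adj x y ∨ (x = u ∧ G.Adj v y) ∨ (y = u ∧ G.Adj v x))
  symm := by
    rintro x y ⟨hxy, hx, hy, hxv, hyv, h⟩
    refine ⟨hxy.symm, hy, hx, hyv, hxv, ?_⟩
    rcases h with h | h | h
    · exact Or.inl (G.symm h)
    · exact Or.inr (Or.inr h)
    · exact Or.inr (Or.inl h)
  loopless := by
    rintro x ⟨hxx, -⟩
    exact hxx rfl
  adj_mem := by
    rintro x y ⟨hxy, hx, hy, hxv, hyv, -⟩
    exact ⟨Finset.mem_erase.2 ⟨hxv, hx⟩, Finset.mem_erase.2 ⟨hyv, hy⟩⟩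

/-! ### Rigidity notions -/

/-- A realisation of `G` in `ℝ^d` is generic if the coordinates of the positions of the
vertices of `G` are algebraically independent over `ℚ`. -/
def IsGeneric (d : ℕ) (G : FinGraph) (p : ℕ → EuclideanSpace ℝ (Fin d)) : Prop :=
  AlgebraicIndependent ℚ fun vi : {x // x ∈ G.verts} × Fin d => p vi.1.1 vi.2

/-- `q` is an infinitesimal motion of `(G, p)`. -/
def IsInfMotion (d : ℕ) (G : FinGraph) (p q : ℕ → EuclideanSpace ℝ (Fin d)) : Prop :=
  ∀ ⦃x y⦄, G.Adj x y → inner ℝ (q x - q y) (p x - p y) = (0 : ℝ)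

/-- `q` is a trivial motion of `(G, p)`: it agrees on the vertices of `G` with a map of the
form `v ↦ A (p v) + b` with `A` skew-symmetric. -/
def IsTrivialMotion (d : ℕ) (G : FinGraph) (p q : ℕ → EuclideanSpace ℝ (Fin d)) : Prop :=
  ∃ (A : EuclideanSpace ℝ (Fin d) →ₗ[ℝ] EuclideanSpace ℝ (Fin d))
    (b : EuclideanSpace ℝ (Fin d)),
      (∀ x y : EuclideanSpace ℝ (Fin d), (inner ℝ (A x) y : ℝ) = -(inner ℝ x (A y) : ℝ)) ∧
        ∀ v ∈ G.verts, q v = A (p v) + b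

/-- `(G, p)` is infinitesimally rigid. -/
def IsInfRigid (d : ℕ) (G : FinGraph) (p : ℕ → EuclideanSpace ℝ (Fin d)) : Prop :=
  ∀ q : ℕ → EuclideanSpace ℝ (Fin d), IsInfMotion d G p q → IsTrivialMotion d G p q

/-- `G` is rigid in `ℝ^d`: every generic realisation is infinitesimally rigid. -/
def IsRigid (d : ℕ) (G : FinGraph) : Prop :=
  ∀ p : ℕ → EuclideanSpace ℝ (Fin d), G.IsGeneric d p → G.IsInfRigid d p

/-- Two realisations are equivalent if corresponding edges have equal lengths. -/
def Equivalent (d : ℕ) (G : FinGraph) (p q : ℕ → EuclideanSpace ℝ (Fin d)) : Prop :=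
  ∀ ⦃x y⦄, G.Adj x y → ‖p x - p y‖ = ‖q x - q y‖

/-- Two realisations are congruent if all pairs of vertices are at equal distances. -/
def Congruent (d : ℕ) (G : FinGraph) (p q : ℕ → EuclideanSpace ℝ (Fin d)) : Prop :=
  ∀ x ∈ G.verts, ∀ y ∈ G.verts, ‖p x - p y‖ = ‖q x - q y‖

/-- `G` is globally rigid in `ℝ^d`. -/
def IsGloballyRigid (d : ℕ) (G : FinGraph) : Prop :=
  ∀ p q : ℕ → EuclideanSpace ℝ (Fin d),
    G.IsGeneric d p → G.Equivalent d p q → G.Congruent d p q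

/-- `G` is `uv`-coincident rigid in `ℝ^d`: some realisation with `p u = p v` is
infinitesimally rigid. -/
def IsCoincidentRigid (d : ℕ) (G : FinGraph) (u v : ℕ) : Prop :=
  ∃ p : ℕ → EuclideanSpace ℝ (Fin d), p u = p v ∧ G.IsInfRigid d p

end FinGraph

/-- The graph `G(S)` of a simplicial multicomplex `S`. -/
def graphOf (S : Multiset (Finset ℕ)) : FinGraph where
  verts := vertexSet S
  Adj x y := x ≠ y ∧ ∃ U ∈ S, x ∈ U ∧ y ∈ U
  symm := by
    rintro x y ⟨hxy, U, hU, hx, hy⟩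
    exact ⟨hxy.symm, U, hU, hy, hx⟩
  loopless := by
    rintro x ⟨hxx, -⟩
    exact hxx rfl
  adj_mem := by
    rintro x y ⟨hxy, U, hU, hx, hy⟩
    exact ⟨mem_vertexSet_of_mem hU hx, mem_vertexSet_of_mem hU hy⟩

/-! ### Cleavage properties -/

/-- The `d`-cleavage property: `G` is `d`-connected and every `d`-element vertex set whose
removal disconnects `G` induces a clique of `G`. -/
def HasCleavage (d : ℕ) (G : FinGraph) : Prop :=
  G.ConnectedGE d ∧ ∀ X : Finset ℕ, X ⊆ G.verts → X.card = d →
    ¬ (G.deleteVerts X).Connected → G.IsClique X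

/-- A `(d+1)`-block of `G`: a subgraph that is a complete graph on `d+1` vertices or is
`(d+1)`-connected, and is maximal among subgraphs of `G` with this property. -/
def IsBlock (d : ℕ) (G D : FinGraph) : Prop :=
  D.IsSubgraph G ∧ (D.IsCompleteOn (d + 1) ∨ D.ConnectedGE (d + 1)) ∧
    ∀ D' : FinGraph, D'.IsSubgraph G → (D'.IsCompleteOn (d + 1) ∨ D'.ConnectedGE (d + 1)) →
      D.IsSubgraph D' → D' = D

/-- The strong `d`-cleavage property (for `d ≥ 4`): the `d`-cleavage property, and every
`(d+1)`-block is globally rigid in `ℝ^d`. -/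
def HasStrongCleavage (d : ℕ) (G : FinGraph) : Prop :=
  HasCleavage d G ∧ ∀ D : FinGraph, IsBlock d G D → D.IsGloballyRigid d

/-!
Everything is read off mod 2 from boundaries. `S/uv` is a cycle iff `∂S` vanishes on the
`k`-sets avoiding `u` and `v` and contains a set `F ∋ u` with `v ∉ F` exactly when it contains
`F - u + v`. This pairing condition is equivalent to `∂S* = ∂S`, i.e. to `S △ S*` being a
cycle, which gives (b). A face containing only one of `u`, `v` lies in at most one simplex of
the cone `S*`. For a face `F ⊇ {u, v}`, the simplices `F + w` of `S*` correspond to the faces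
`F - u + w ∈ ∂S`, `w ∉ F`; since every simplex through `F - u` has exactly two faces of the
form `F - u + w`, their number has the parity of the remaining term `w = u`, i.e. of `F ∈ ∂S`.

For (a), `S'` is a cone with apex `u`, so a member `K` of `S†` lies in `S'` iff
`K - u ∈ ∂S' = ∂S`; likewise for `v`. For (c), contraction kills `S*` and turns subcycles of
`S △ S*` into subcycles of `S/uv`, while a nonempty cycle without repeated simplices is never
killed; a proper splitting of `S △ S*` would therefore yield two copies of `S/uv` inside `S/uv`.
-/

open Finset
open scoped symmDiff

section Boundary

variable {k : ℕ} {S T : Multiset (Finset ℕ)} {F : Finset ℕ}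

lemma simplexCount_add (S T : Multiset (Finset ℕ)) (F : Finset ℕ) :
    simplexCount (S + T) F = simplexCount S F + simplexCount T F :=
  Multiset.countP_add _ _ _

lemma exists_mem_superset_of_mem_boundarySet (hF : F ∈ boundarySet k S) : ∃ U ∈ S, F ⊆ U :=
  Multiset.countP_pos.1 hF.2.pos

lemma subset_vertexSet_of_mem_boundarySet (hF : F ∈ boundarySet k S) : F ⊆ vertexSet S := by
  obtain ⟨U, hU, hFU⟩ := exists_mem_superset_of_mem_boundarySet hF
  exact fun x hx => mem_vertexSet_of_mem hU (hFU hx)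

lemma isSimpCycle_iff : IsSimpCycle k S ↔ IsMultiComplex k S ∧ boundarySet k S = ∅ := by
  simp only [IsSimpCycle, Set.eq_empty_iff_forall_notMem, boundarySet, Set.mem_ofPred_eq,
    not_and, Nat.not_odd_iff_even]

lemma boundarySet_symmDiffM (S T : Multiset (Finset ℕ)) :
    boundarySet k (symmDiffM S T) = boundarySet k S ∆ boundarySet k T := by
  ext F
  have hcount : simplexCount (symmDiffM S T) F + 2 * simplexCount (S ∩ T) F =
      simplexCount S F + simplexCount T F := by
    have h : symmDiffM S T + (S ∩ T) + (S ∩ T) = S + T := by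
      ext a
      simp only [symmDiffM, Multiset.count_add, Multiset.count_sub, Multiset.count_inter]
      omega
    simpa only [simplexCount_add, two_mul, add_assoc] using congrArg (simplexCount · F) h
  have := congrArg Odd hcount
  simp only [Nat.odd_add, even_two_mul, iff_true, ← Nat.not_odd_iff_even] at this
  simp only [boundarySet, Set.mem_symmDiff, Set.mem_ofPred_eq, this]
  tauto

lemma IsMultiComplex.symmDiffM (hS : IsMultiComplex k S) (hT : IsMultiComplex k T) :
    IsMultiComplex k (symmDiffM S T) := by
  intro U hU
  rcases Multiset.mem_add.1 hU with h | h
  · exact hS U (Multiset.mem_of_le (Multiset.sub_le_self _ _) h)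
  · exact hT U (Multiset.mem_of_le (Multiset.sub_le_self _ _) h)

lemma IsSimpCycle.boundarySet_eq (h : IsSimpCycle k (symmDiffM S T)) :
    boundarySet k S = boundarySet k T := by
  rw [← symmDiff_eq_bot, ← boundarySet_symmDiffM]
  exact (isSimpCycle_iff.1 h).2

lemma isSimpCycle_symmDiffM_iff (hS : IsMultiComplex k S) (hT : IsMultiComplex k T) :
    IsSimpCycle k (symmDiffM S T) ↔ boundarySet k S = boundarySet k T := by
  rw [isSimpCycle_iff, boundarySet_symmDiffM, ← Set.bot_eq_empty, symmDiff_eq_bot]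
  exact ⟨And.right, fun h => ⟨hS.symmDiffM hT, h⟩⟩

end Boundary

section Counting

variable {k : ℕ} {S T : Multiset (Finset ℕ)} {F : Finset ℕ}

lemma insert_eq_of_subset_of_card_succ {K : Finset ℕ} {w : ℕ} (hK : K.card = k + 1)
    (hF : F.card = k) (hFK : F ⊆ K) (hwK : w ∈ K) (hwF : w ∉ F) : insert w F = K :=
  eq_of_subset_of_card_le (insert_subset hwK hFK) (by rw [card_insert_of_notMem hwF]; omega)

lemma simplexCount_eq_card_filter_insert_mem {W : Finset ℕ} (hT : T.Nodup)
    (hTk : IsMultiComplex k T) (hF : F.card = k) (hWF : Disjoint W F)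
    (hW : ∀ K ∈ T, F ⊆ K → ∃ w ∈ W, w ∈ K) :
    simplexCount T F = #{w ∈ W | insert w F ∈ T} := by
  classical
  have hcount : simplexCount T F = #{K ∈ T.toFinset | F ⊆ K} := by
    rw [simplexCount, Multiset.countP_eq_card_filter, ← Multiset.toFinset_filter,
      Multiset.toFinset_card_of_nodup (hT.filter _)]
  rw [hcount]
  refine (card_nbij (insert · F) (fun w hw => ?_) (fun w₁ hw₁ w₂ _ h => ?_) ?_).symm
  · obtain ⟨-, hwT⟩ := mem_filter.1 hw
    exact mem_filter.2 ⟨Multiset.mem_toFinset.2 hwT, subset_insert _ _⟩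
  · exact (insert_inj (disjoint_left.1 hWF (mem_filter.1 hw₁).1)).1 h
  · intro K hK
    obtain ⟨hKT, hFK⟩ := mem_filter.1 hK
    have hKT := Multiset.mem_toFinset.1 hKT
    obtain ⟨w, hwW, hwK⟩ := hW K hKT hFK
    have hKeq :=
      insert_eq_of_subset_of_card_succ (hTk K hKT) hF hFK hwK (disjoint_left.1 hWF hwW)
    exact ⟨w, mem_filter.2 ⟨hwW, hKeq ▸ hKT⟩, hKeq⟩

lemma mem_boundarySet_iff_insert_mem {u : ℕ} (hT : T.Nodup) (hTk : IsMultiComplex k T)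
    (hu : ∀ K ∈ T, u ∈ K) (hF : F.card = k) (huF : u ∉ F) :
    F ∈ boundarySet k T ↔ insert u F ∈ T := by
  classical
  rw [boundarySet, Set.mem_ofPred_eq, simplexCount_eq_card_filter_insert_mem hT hTk hF
    (disjoint_singleton_left.2 huF) fun K hK _ => ⟨u, mem_singleton_self u, hu K hK⟩,
    filter_singleton]
  split_ifs with h <;> simp [h, hF]

lemma mem_iff_erase_mem_boundarySet {u : ℕ} {K : Finset ℕ} (hT : T.Nodup)
    (hTk : IsMultiComplex k T) (hu : ∀ K ∈ T, u ∈ K) (huK : u ∈ K) (hK : K.card = k + 1) :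
    K ∈ T ↔ K.erase u ∈ boundarySet k T := by
  rw [mem_boundarySet_iff_insert_mem hT hTk hu (by rw [card_erase_of_mem huK, hK]; rfl)
    (notMem_erase u K), insert_erase huK]

lemma sum_simplexCount_insert {A W : Finset ℕ} (hS : IsMultiComplex k S) (hA : A.card + 1 = k)
    (hWA : Disjoint W A) (hW : ∀ U ∈ S, A ⊆ U → U \ A ⊆ W) :
    ∑ w ∈ W, simplexCount S (insert w A) = 2 * simplexCount S A := by
  classical
  induction S using Multiset.induction_on with
  | empty => simp [simplexCount]
  | cons U S ih =>
    have hU := hS U (Multiset.mem_cons_self U S)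
    simp only [simplexCount, Multiset.countP_cons, sum_add_distrib, mul_add] at ih ⊢
    rw [ih (fun U' hU' => hS U' (Multiset.mem_cons_of_mem hU'))
      (fun U' hU' => hW U' (Multiset.mem_cons_of_mem hU')), sum_boole, Nat.cast_id]
    congr 1
    split_ifs with hAU
    · have hfilter : {w ∈ W | insert w A ⊆ U} = U \ A := by
        ext w
        simp only [mem_filter, mem_sdiff, insert_subset_iff]
        refine ⟨fun ⟨hwW, hwU, _⟩ => ⟨hwU, disjoint_left.1 hWA hwW⟩,
          fun ⟨hwU, hwA⟩ => ?_⟩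
        exact ⟨hW U (Multiset.mem_cons_self U S) hAU (mem_sdiff.2 ⟨hwU, hwA⟩), hwU, hAU⟩
      rw [hfilter, card_sdiff_of_subset hAU]
      omega
    · rw [filter_false_of_mem fun w _ h => hAU ((subset_insert w A).trans h), card_empty]

end Counting

lemma card_insert_erase_of_mem {F : Finset ℕ} {u v : ℕ} (huF : u ∈ F) (hvF : v ∉ F) :
    (insert v (F.erase u)).card = F.card := by
  rw [card_insert_of_notMem fun h => hvF (mem_of_mem_erase h), card_erase_add_one huF]

/-- Exactly the condition for `S/uv` to be a cycle (`isSimpCycle_contractS_iff`). -/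
def BoundaryPaired (k : ℕ) (S : Multiset (Finset ℕ)) (u v : ℕ) : Prop :=
  (∀ F ∈ boundarySet k S, u ∈ F ∨ v ∈ F) ∧
    ∀ F : Finset ℕ, u ∈ F → v ∉ F →
      (F ∈ boundarySet k S ↔ insert v (F.erase u) ∈ boundarySet k S)

section Contraction

variable {k : ℕ} {C : Multiset (Finset ℕ)} {u v : ℕ} {F : Finset ℕ}

lemma IsMultiComplex.contractS (hC : IsMultiComplex k C) (u v : ℕ) :
    IsMultiComplex k (contractS C u v) := by
  intro W hW
  obtain ⟨U, hU, rfl⟩ := Multiset.mem_map.1 hW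
  obtain ⟨hUC, huv⟩ := Multiset.mem_filter.1 hU
  split_ifs with hvU
  · rw [card_insert_erase_of_mem hvU fun huU => huv ⟨huU, hvU⟩, hC U hUC]
  · exact hC U hUC

lemma notMem_of_mem_contractS (hne : u ≠ v) {W : Finset ℕ} (hW : W ∈ contractS C u v) :
    v ∉ W := by
  obtain ⟨U, -, rfl⟩ := Multiset.mem_map.1 hW
  split_ifs with hvU
  · simp [hne.symm]
  · exact hvU

lemma simplexCount_contractS (C : Multiset (Finset ℕ)) (u v : ℕ) (F : Finset ℕ) :
    simplexCount (contractS C u v) F = Multiset.countP (fun U =>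
      (F ⊆ if v ∈ U then insert u (U.erase v) else U) ∧ ¬(u ∈ U ∧ v ∈ U)) C := by
  rw [simplexCount, contractS, Multiset.countP_map, ← Multiset.countP_eq_card_filter,
    Multiset.countP_filter]

lemma simplexCount_contractS_of_notMem (hC : IsMultiComplex k C) (hne : u ≠ v)
    (hF : F.card = k) (huF : u ∉ F) (hvF : v ∉ F) :
    simplexCount (contractS C u v) F = simplexCount C F := by
  rw [simplexCount_contractS, simplexCount]
  refine Multiset.countP_congr rfl fun U hU => ?_
  have hFc : (F ⊆ if v ∈ U then insert u (U.erase v) else U) ↔ F ⊆ U := by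
    split_ifs
    · rw [subset_insert_iff_of_notMem huF, subset_erase]
      exact and_iff_left hvF
    · rfl
  have hcard : ¬(u ∈ U ∧ v ∈ U ∧ F ⊆ U) := fun ⟨huU, hvU, hFU⟩ => by
    have := card_le_card (insert_subset huU (insert_subset hvU hFU))
    rw [card_insert_of_notMem (by simp [hne, huF]), card_insert_of_notMem hvF, hF, hC U hU] at this
    omega
  simp only [hFc, eq_iff_iff]
  tauto

/-- A simplex through `F - u + v` but not `u` becomes one through `F`, and the simplices
through `F ∪ {v}` are counted twice on the left and deleted on the right. -/
lemma simplexCount_add_simplexCount_insert_erase (huF : u ∈ F) (hvF : v ∉ F) :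
    simplexCount C F + simplexCount C (insert v (F.erase u)) =
      simplexCount (contractS C u v) F + 2 * simplexCount C (insert v F) := by
  classical
  rw [simplexCount_contractS]
  induction C using Multiset.induction_on with
  | empty => simp [simplexCount]
  | cons U C ih =>
    simp only [simplexCount, Multiset.countP_cons] at ih ⊢
    have hF : F ⊆ U ↔ u ∈ U ∧ F.erase u ⊆ U := by
      rw [← insert_subset_iff, insert_erase huF]
    have hvFU : insert v F ⊆ U ↔ v ∈ U ∧ u ∈ U ∧ F.erase u ⊆ U := by
      rw [insert_subset_iff, hF]
    have hFc : F ⊆ insert u (U.erase v) ↔ F.erase u ⊆ U := by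
      rw [subset_insert_iff, subset_erase]
      exact and_iff_left fun h => hvF (mem_of_mem_erase h)
    have hU : ((if F ⊆ U then 1 else 0) + if insert v (F.erase u) ⊆ U then 1 else 0) =
        (if (F ⊆ if v ∈ U then insert u (U.erase v) else U) ∧ ¬(u ∈ U ∧ v ∈ U) then 1
          else 0) + 2 * if insert v F ⊆ U then 1 else 0 := by
      by_cases huU : u ∈ U <;> by_cases hvU : v ∈ U <;> by_cases hFU : F.erase u ⊆ U <;>
        simp [hF, hvFU, hFc, insert_subset_iff, huU, hvU, hFU]
    omega

lemma even_simplexCount_contractS_iff (hF : F.card = k) (huF : u ∈ F)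
    (hvF : v ∉ F) : Even (simplexCount (contractS C u v) F) ↔
      (F ∈ boundarySet k C ↔ insert v (F.erase u) ∈ boundarySet k C) := by
  simp only [boundarySet, Set.mem_ofPred_eq, card_insert_erase_of_mem huF hvF, hF, true_and]
  rw [← Nat.even_add', simplexCount_add_simplexCount_insert_erase huF hvF, Nat.even_add,
    iff_true_right (even_two_mul _)]

lemma isSimpCycle_contractS_iff (hC : IsMultiComplex k C) (hne : u ≠ v) :
    IsSimpCycle k (contractS C u v) ↔ BoundaryPaired k C u v := by
  simp only [IsSimpCycle, hC.contractS, true_and]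
  constructor
  · intro h
    refine ⟨fun F hF => ?_, fun F huF hvF => ?_⟩
    · by_contra! huvF
      have := h F hF.1
      rw [simplexCount_contractS_of_notMem hC hne hF.1 huvF.1 huvF.2] at this
      exact Nat.not_even_iff_odd.2 hF.2 this
    · by_cases hF : F.card = k
      · exact (even_simplexCount_contractS_iff hF huF hvF).1 (h F hF)
      · simp [boundarySet, card_insert_erase_of_mem huF hvF, hF]
  · rintro ⟨hsupp, hswap⟩ F hF
    by_cases hvF : v ∈ F
    · rw [simplexCount, Multiset.countP_eq_zero.2 fun W hW hFW =>
        notMem_of_mem_contractS hne hW (hFW hvF)]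
      exact Even.zero
    by_cases huF : u ∈ F
    · exact (even_simplexCount_contractS_iff hF huF hvF).2 (hswap F huF hvF)
    · rw [simplexCount_contractS_of_notMem hC hne hF huF hvF, ← Nat.not_odd_iff_even]
      exact fun hodd => (hsupp F ⟨hF, hodd⟩).elim huF hvF

end Contraction

section FaceStar

variable {k : ℕ} {S : Multiset (Finset ℕ)} {u v : ℕ} {F K : Finset ℕ}

lemma mem_faceDag_iff : K ∈ faceDag k S u v ↔ K ⊆ vertexSet S ∧ K.card = k + 1 ∧
    u ∈ K ∧ v ∈ K ∧ (∃ U ∈ S, K.erase u ⊆ U) ∧ ∃ U ∈ S, K.erase v ⊆ U := by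
  simp only [faceDag, Multiset.mem_filter, Finset.mem_val, mem_powersetCard, and_assoc]

lemma nodup_faceDag : (faceDag k S u v).Nodup := by
  classical exact ((vertexSet S).powersetCard (k + 1)).nodup.filter _

lemma isMultiComplex_faceDag : IsMultiComplex k (faceDag k S u v) :=
  fun _ hK => (mem_faceDag_iff.1 hK).2.1

lemma faceStar_le_faceDag : faceStar k S u v ≤ faceDag k S u v := by
  classical exact Multiset.filter_le _ _

lemma nodup_faceStar : (faceStar k S u v).Nodup := by
  classical exact nodup_faceDag.filter _

lemma isMultiComplex_faceStar : IsMultiComplex k (faceStar k S u v) :=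
  fun K hK => isMultiComplex_faceDag K (Multiset.mem_of_le faceStar_le_faceDag hK)

lemma mem_faceStar_iff (hne : u ≠ v) : K ∈ faceStar k S u v ↔
    u ∈ K ∧ v ∈ K ∧ K.erase u ∈ boundarySet k S ∧ K.erase v ∈ boundarySet k S := by
  simp only [faceStar, Multiset.mem_filter, mem_faceDag_iff]
  constructor
  · tauto
  · rintro ⟨huK, hvK, hbu, hbv⟩
    refine ⟨⟨fun x hx => ?_, ?_, huK, hvK, exists_mem_superset_of_mem_boundarySet hbu,
      exists_mem_superset_of_mem_boundarySet hbv⟩, hbu, hbv⟩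
    · obtain rfl | hxu := eq_or_ne x u
      · exact subset_vertexSet_of_mem_boundarySet hbv (mem_erase_of_ne_of_mem hne huK)
      · exact subset_vertexSet_of_mem_boundarySet hbu (mem_erase_of_ne_of_mem hxu hx)
    · rw [← card_erase_add_one huK, hbu.1]

lemma faceStar_comm : faceStar k S u v = faceStar k S v u := by
  classical
  have hdag : faceDag k S u v = faceDag k S v u :=
    Multiset.filter_congr fun K _ => by tauto
  rw [faceStar, faceStar, hdag]
  exact Multiset.filter_congr fun K _ => and_comm

lemma mem_of_mem_faceStar (hK : K ∈ faceStar k S u v) : u ∈ K ∧ v ∈ K :=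
  have h := mem_faceDag_iff.1 (Multiset.mem_of_le faceStar_le_faceDag hK)
  ⟨h.2.2.1, h.2.2.2.1⟩

lemma notMem_boundarySet_faceStar (hne : u ≠ v) (huF : u ∉ F) (hvF : v ∉ F) :
    F ∉ boundarySet k (faceStar k S u v) := fun hF => by
  rw [mem_boundarySet_iff_insert_mem nodup_faceStar isMultiComplex_faceStar
    (fun K hK => (mem_of_mem_faceStar hK).1) hF.1 huF] at hF
  rcases mem_insert.1 (mem_of_mem_faceStar hF).2 with h | h
  exacts [hne h.symm, hvF h]

lemma mem_boundarySet_faceStar_iff_of_notMem (hne : u ≠ v) (huF : u ∈ F) (hvF : v ∉ F) :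
    F ∈ boundarySet k (faceStar k S u v) ↔
      F ∈ boundarySet k S ∧ insert v (F.erase u) ∈ boundarySet k S := by
  by_cases hF : F.card = k
  · rw [mem_boundarySet_iff_insert_mem nodup_faceStar isMultiComplex_faceStar
      (fun K hK => (mem_of_mem_faceStar hK).2) hF hvF, mem_faceStar_iff hne,
      erase_insert_of_ne hne.symm, erase_insert hvF]
    simp [huF, and_comm]
  · simp [boundarySet, hF]

lemma BoundaryPaired.symm (h : BoundaryPaired k S u v) : BoundaryPaired k S v u := by
  refine ⟨fun F hF => (h.1 F hF).symm, fun F hvF huF => ?_⟩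
  have hne : u ≠ v := by rintro rfl; exact huF hvF
  have hswap := h.2 (insert u (F.erase v)) (mem_insert_self u _) (by simp [hne.symm])
  rwa [erase_insert fun h => huF (mem_of_mem_erase h), insert_erase hvF, Iff.comm] at hswap

lemma insert_mem_faceStar_iff (hne : u ≠ v) (hpair : BoundaryPaired k S u v) (huF : u ∈ F)
    (hvF : v ∈ F) {w : ℕ} (hwF : w ∉ F) :
    insert w F ∈ faceStar k S u v ↔ insert w (F.erase u) ∈ boundarySet k S := by
  have hwu : w ≠ u := fun h => hwF (h ▸ huF)
  have hwv : w ≠ v := fun h => hwF (h ▸ hvF)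
  have hswap := hpair.2 (insert w (F.erase v)) (by simp [hne, huF]) (by simp [hwv.symm])
  rw [erase_insert_of_ne hwu, erase_right_comm, insert_comm,
    insert_erase (mem_erase_of_ne_of_mem hne.symm hvF)] at hswap
  rw [mem_faceStar_iff hne, erase_insert_of_ne hwu, erase_insert_of_ne hwv, hswap]
  simp [huF, hvF]

end FaceStar

section FaceStar

variable {k : ℕ} {S : Multiset (Finset ℕ)} {u v : ℕ} {F : Finset ℕ}

lemma mem_boundarySet_faceStar_iff_of_mem (hS : IsMultiComplex k S) (hne : u ≠ v)
    (hpair : BoundaryPaired k S u v) (huF : u ∈ F) (hvF : v ∈ F) :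
    F ∈ boundarySet k (faceStar k S u v) ↔ F ∈ boundarySet k S := by
  classical
  by_cases hF : F.card = k
  swap
  · simp [boundarySet, hF]
  set A := F.erase u
  set W := vertexSet S \ F
  have hcount :
      simplexCount (faceStar k S u v) F = #{w ∈ W | insert w A ∈ boundarySet k S} := by
    rw [simplexCount_eq_card_filter_insert_mem nodup_faceStar isMultiComplex_faceStar hF
      sdiff_disjoint]
    · exact congrArg card (filter_congr fun w hw =>
        insert_mem_faceStar_iff hne hpair huF hvF (mem_sdiff.1 hw).2)
    · intro K hK hFK
      obtain ⟨hKV, hKk, -⟩ := mem_faceDag_iff.1 (Multiset.mem_of_le faceStar_le_faceDag hK)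
      obtain ⟨w, hwK, hwF⟩ := not_subset.1 fun hKF : K ⊆ F => by
        have := card_le_card hKF
        omega
      exact ⟨w, mem_sdiff.2 ⟨hKV hwK, hwF⟩, hwK⟩
  have hA : A.card + 1 = k := by rw [card_erase_add_one huF, hF]
  have hodd : Odd #{w ∈ W | insert w A ∈ boundarySet k S} ↔
      Odd (∑ w ∈ W, simplexCount S (insert w A)) := by
    rw [odd_sum_iff_odd_card_odd]
    refine iff_of_eq (congrArg (Odd ∘ card) (filter_congr fun w hw => ?_))
    have hwA : w ∉ A := fun h => (mem_sdiff.1 hw).2 (mem_of_mem_erase h)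
    simp [boundarySet, card_insert_of_notMem hwA, hA]
  have hsum : simplexCount S F + ∑ w ∈ W, simplexCount S (insert w A) =
      2 * simplexCount S A := by
    have huW : u ∉ W := fun h => (mem_sdiff.1 h).2 huF
    rw [← sum_simplexCount_insert hS hA (W := insert u W), sum_insert huW, insert_erase huF]
    · refine disjoint_insert_left.2 ⟨notMem_erase u F, ?_⟩
      exact sdiff_disjoint.mono_right (erase_subset u F)
    · intro U hU _ x hx
      obtain ⟨hxU, hxA⟩ := mem_sdiff.1 hx
      by_cases hxF : x ∈ F
      · exact mem_insert.2 (Or.inl (by_contra fun hxu => hxA (mem_erase_of_ne_of_mem hxu hxF)))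
      · exact mem_insert_of_mem (mem_sdiff.2 ⟨mem_vertexSet_of_mem hU hxU, hxF⟩)
  have hpar := congrArg Even hsum
  rw [Nat.even_add', iff_true_intro (even_two_mul _), eq_iff_iff, iff_true] at hpar
  change F.card = k ∧ Odd (simplexCount _ F) ↔ F.card = k ∧ Odd (simplexCount S F)
  rw [hcount, hodd, hpar]

lemma boundarySet_faceStar_eq_iff (hS : IsMultiComplex k S) (hne : u ≠ v) :
    boundarySet k (faceStar k S u v) = boundarySet k S ↔ BoundaryPaired k S u v := by
  constructor
  · intro h
    refine ⟨fun F hF => ?_, fun F huF hvF => ?_⟩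
    · by_contra! huvF
      exact notMem_boundarySet_faceStar hne huvF.1 huvF.2 (h ▸ hF)
    · have hF := mem_boundarySet_faceStar_iff_of_notMem (S := S) (k := k) hne huF hvF
      have hG := mem_boundarySet_faceStar_iff_of_notMem (S := S) (k := k) hne.symm
        (mem_insert_self v (F.erase u)) (by simp [hne])
      rw [h] at hF
      rw [faceStar_comm, h, erase_insert fun h => hvF (mem_of_mem_erase h),
        insert_erase huF] at hG
      tauto
  · intro hpair
    ext F
    by_cases huF : u ∈ F <;> by_cases hvF : v ∈ F
    · exact mem_boundarySet_faceStar_iff_of_mem hS hne hpair huF hvF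
    · rw [mem_boundarySet_faceStar_iff_of_notMem hne huF hvF, ← hpair.2 F huF hvF, and_self]
    · rw [faceStar_comm, mem_boundarySet_faceStar_iff_of_notMem hne.symm hvF huF,
        ← hpair.symm.2 F hvF huF, and_self]
    · exact iff_of_false (notMem_boundarySet_faceStar hne huF hvF)
        fun hF => (hpair.1 F hF).elim huF hvF

end FaceStar

section Cycles

variable {k : ℕ} {S T T' : Multiset (Finset ℕ)} {u v : ℕ}

lemma eq_faceStar_of_isSimpCycle_symmDiffM {S' : Multiset (Finset ℕ)}
    (hle : S' ≤ faceDag k S u v) (hcyc : IsSimpCycle k (symmDiffM S S')) :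
    S' = faceStar k S u v := by
  classical
  have hbd := hcyc.boundarySet_eq
  have hnd : S'.Nodup := Multiset.nodup_of_le hle nodup_faceDag
  have hS'k : IsMultiComplex k S' := fun K hK =>
    isMultiComplex_faceDag K (Multiset.mem_of_le hle hK)
  have hmem : ∀ K ∈ S', u ∈ K ∧ v ∈ K := fun K hK =>
    (mem_faceDag_iff.1 (Multiset.mem_of_le hle hK)).2.2.imp_right And.left
  refine (Multiset.Nodup.ext hnd nodup_faceStar).2 fun K => ?_
  by_cases hK : K ∈ faceDag k S u v
  · obtain ⟨-, hKk, huK, hvK, -⟩ := mem_faceDag_iff.1 hK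
    have hu := mem_iff_erase_mem_boundarySet hnd hS'k (fun K hK => (hmem K hK).1) huK hKk
    have hv := mem_iff_erase_mem_boundarySet hnd hS'k (fun K hK => (hmem K hK).2) hvK hKk
    rw [← hbd] at hu hv
    simp only [faceStar, Multiset.mem_filter, ← hu, ← hv, hK, true_and, and_self]
  · exact iff_of_false (fun h => hK (Multiset.mem_of_le hle h))
      fun h => hK (Multiset.mem_of_le faceStar_le_faceDag h)

lemma isSimpCycle_contractS_iff_isSimpCycle_symmDiffM_faceStar (hS : IsMultiComplex k S)
    (hne : u ≠ v) :
    IsSimpCycle k (contractS S u v) ↔ IsSimpCycle k (symmDiffM S (faceStar k S u v)) := by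
  rw [isSimpCycle_contractS_iff hS hne, isSimpCycle_symmDiffM_iff hS isMultiComplex_faceStar,
    eq_comm, boundarySet_faceStar_eq_iff hS hne]

lemma IsSimpCycle.contractS (hT : IsSimpCycle k T) (hne : u ≠ v) :
    IsSimpCycle k (contractS T u v) := by
  have hbd := (isSimpCycle_iff.1 hT).2
  refine (isSimpCycle_contractS_iff hT.1 hne).2 ⟨fun F hF => ?_, fun F _ _ => ?_⟩
  · simp [hbd] at hF
  · simp [hbd]

lemma IsSimpCycle.tsub (hT : IsSimpCycle k T) (hT' : IsSimpCycle k T') (hle : T' ≤ T) :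
    IsSimpCycle k (T - T') := by
  refine ⟨fun U hU => hT.1 U (Multiset.mem_of_le (Multiset.sub_le_self _ _) hU), fun F hF => ?_⟩
  have h := hT.2 F hF
  rw [← tsub_add_cancel_of_le hle, simplexCount_add, Nat.even_add] at h
  exact h.2 (hT'.2 F hF)

lemma IsSimpCycle.exists_notMem (hT : IsSimpCycle k T) (hnd : T.Nodup) (h0 : T ≠ 0) (u : ℕ) :
    ∃ K ∈ T, u ∉ K := by
  by_contra! hu
  obtain ⟨K, hK⟩ := Multiset.exists_mem_of_ne_zero h0
  have := (mem_iff_erase_mem_boundarySet hnd hT.1 hu (hu K hK) (hT.1 K hK)).1 hK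
  rw [(isSimpCycle_iff.1 hT).2] at this
  exact this

lemma nodup_symmDiffM (hS : S.Nodup) (hT : T.Nodup) : (symmDiffM S T).Nodup := by
  refine Multiset.nodup_add.2 ⟨Multiset.nodup_of_le (Multiset.sub_le_self _ _) hS,
    Multiset.nodup_of_le (Multiset.sub_le_self _ _) hT,
    Multiset.disjoint_left.2 fun hS' hT' => ?_⟩
  have h1 := Multiset.count_pos.2 hS'
  have h2 := Multiset.count_pos.2 hT'
  rw [Multiset.count_sub] at h1 h2
  omega

lemma contractS_add (S T : Multiset (Finset ℕ)) (u v : ℕ) :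
    contractS (S + T) u v = contractS S u v + contractS T u v := by
  simp only [contractS, Multiset.filter_add, Multiset.map_add]

lemma contractS_mono (h : S ≤ T) (u v : ℕ) : contractS S u v ≤ contractS T u v :=
  Multiset.map_le_map (Multiset.filter_le_filter _ h)

lemma contractS_eq_zero_iff : contractS S u v = 0 ↔ ∀ U ∈ S, u ∈ U ∧ v ∈ U := by
  simp only [contractS, Multiset.map_eq_zero, Multiset.filter_eq_nil, not_not]

lemma contractS_eq_of_isSimpCircuit (hS : IsSimpCircuit k (contractS S u v)) (hne : u ≠ v)
    (hT : IsSimpCycle k T) (hnd : T.Nodup) (h0 : T ≠ 0)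
    (hle : contractS T u v ≤ contractS S u v) : contractS T u v = contractS S u v := by
  by_contra hneq
  refine hS.2.2 _ hle (fun hT0 => ?_) hneq (hT.contractS hne)
  obtain ⟨K, hK, huK⟩ := hT.exists_notMem hnd h0 u
  exact huK (contractS_eq_zero_iff.1 hT0 K hK).1

lemma contractS_symmDiffM_faceStar_le :
    contractS (symmDiffM S (faceStar k S u v)) u v ≤ contractS S u v := by
  rw [symmDiffM, contractS_add, contractS_eq_zero_iff.2 fun U hU =>
    mem_of_mem_faceStar (Multiset.mem_of_le (Multiset.sub_le_self _ _) hU), add_zero]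
  exact contractS_mono (Multiset.sub_le_self _ _) u v

lemma isSimpCircuit_symmDiffM_faceStar (hS : IsMultiComplex k S) (hnd : S.Nodup) (hne : u ≠ v)
    (hC : IsSimpCircuit k (contractS S u v)) :
    IsSimpCircuit k (symmDiffM S (faceStar k S u v)) := by
  set T := symmDiffM S (faceStar k S u v)
  have hT : IsSimpCycle k T :=
    (isSimpCycle_contractS_iff_isSimpCycle_symmDiffM_faceStar hS hne).1 hC.1
  have hTnd : T.Nodup := nodup_symmDiffM hnd nodup_faceStar
  refine ⟨hT, fun hT0 => hC.2.1 ?_, fun T' hle h0 hneq hT' => ?_⟩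
  · have hSle : S ≤ faceStar k S u v := tsub_eq_zero_iff_le.1 (add_eq_zero.1 hT0).1
    exact contractS_eq_zero_iff.2 fun U hU => mem_of_mem_faceStar (Multiset.mem_of_le hSle hU)
  have hcontr (T₀) (hT₀ : T₀ ≤ T) (hcyc : IsSimpCycle k T₀) (h0 : T₀ ≠ 0) :=
    contractS_eq_of_isSimpCircuit hC hne hcyc (Multiset.nodup_of_le hT₀ hTnd) h0
      ((contractS_mono hT₀ u v).trans contractS_symmDiffM_faceStar_le)
  have h1 := hcontr T' hle hT' h0
  have h2 := hcontr (T - T') (Multiset.sub_le_self _ _) (hT.tsub hT' hle)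
    fun h => hneq (le_antisymm hle (tsub_eq_zero_iff_le.1 h))
  have hcard : Multiset.card (contractS T u v) ≤ Multiset.card (contractS S u v) :=
    Multiset.card_le_card contractS_symmDiffM_faceStar_le
  rw [← add_tsub_cancel_of_le hle, contractS_add, h1, h2, Multiset.card_add] at hcard
  exact hC.2.1 (Multiset.card_eq_zero.1 (by omega))

end Cycles

theorem faceStar_characterisation_general (k : ℕ)
    (S : Multiset (Finset ℕ)) (hScomplex : IsMultiComplex k S) (hnodup : S.Nodup)
    (u v : ℕ) (hne : u ≠ v) :
    (∀ S' : Multiset (Finset ℕ), S' ≤ faceDag k S u v →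
        IsSimpCycle k (symmDiffM S S') → S' = faceStar k S u v) ∧
      (IsSimpCycle k (contractS S u v) ↔ IsSimpCycle k (symmDiffM S (faceStar k S u v))) ∧
      (IsSimpCircuit k (contractS S u v) → IsSimpCircuit k (symmDiffM S (faceStar k S u v))) :=
  ⟨fun _ => eq_faceStar_of_isSimpCycle_symmDiffM,
    isSimpCycle_contractS_iff_isSimpCycle_symmDiffM_faceStar hScomplex hne,
    isSimpCircuit_symmDiffM_faceStar hScomplex hnodup hne⟩

theorem faceStar_characterisation (k : ℕ) (hk : 1 ≤ k)
    (S : Multiset (Finset ℕ)) (hScomplex : IsMultiComplex k S) (hnodup : S.Nodup)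
    (u v : ℕ) (hu : u ∈ vertexSet S) (hv : v ∈ vertexSet S) (hne : u ≠ v) :
    (∀ S' : Multiset (Finset ℕ), S' ≤ faceDag k S u v →
        IsSimpCycle k (symmDiffM S S') → S' = faceStar k S u v) ∧
      (IsSimpCycle k (contractS S u v) ↔ IsSimpCycle k (symmDiffM S (faceStar k S u v))) ∧
      (IsSimpCircuit k (contractS S u v) → IsSimpCircuit k (symmDiffM S (faceStar k S u v))) :=
  faceStar_characterisation_general k S hScomplex hnodup u v hne
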